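/- Let k be a commutative unital ring, let m ≥ 1, and let A be a unital k-algebra such that [x₁,x₂]^m is a polynomial identity of A. Then an element a ∈ A is nilpotent if and only if a belongs to every two-sided ideal I of A for which the quotient ring A/I is a (nontrivial) commutative integral domain. (Equivalently, A modulo its ideal of nilpotent elements is a subdirect product of commutative integral domains.) -/

import Mathlib

/-!
If `a` is not nilpotent, Zorn gives a two-sided ideal `P` maximal among those missing every power
of `a`; it is prime, so `A ⧸ P` is a prime ring satisfying `[x, y]^m = 0`. In a prime ring this
identity forces commutativity: if `a² = 0` then `a (v a)^m = 0` for all `v`, and Levitzki's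
descent lowers the exponent one step at a time (linearize, substitute so that only the identity
permutation survives, and use primeness) down to `a = 0`. So the ring is reduced, every
commutator is nilpotent, hence zero, and a commutative prime ring is a domain.
-/

/-- `p` is a polynomial identity of the `k`-algebra `A`: every `k`-algebra
homomorphism from the free associative algebra on countably many variables to
`A` (equivalently, every substitution of elements of `A` for the variables)
sends `p` to `0`. -/
def IsPolyId (k A : Type*) [CommRing k] [Semiring A] [Algebra k A]
    (p : FreeAlgebra k ℕ) : Prop :=
  ∀ f : ℕ → A, FreeAlgebra.lift k f p = 0

/-- `[x₁,x₂]^m`, the `m`-th power of the commutator of the first two variables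
of the free algebra. -/
noncomputable def commPow (k : Type*) [CommRing k] (m : ℕ) : FreeAlgebra k ℕ :=
  (FreeAlgebra.ι k 0 * FreeAlgebra.ι k 1 - FreeAlgebra.ι k 1 * FreeAlgebra.ι k 0) ^ m

/-- `[x₁,x₂][x₃,x₄]⋯[x₂ₘ₋₁,x₂ₘ]`, the product of `m` commutators in `2m`
distinct variables of the free algebra. -/
noncomputable def commProd (k : Type*) [CommRing k] (m : ℕ) : FreeAlgebra k ℕ :=
  ((List.range m).map (fun i =>
    FreeAlgebra.ι k (2 * i) * FreeAlgebra.ι k (2 * i + 1)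
      - FreeAlgebra.ι k (2 * i + 1) * FreeAlgebra.ι k (2 * i))).prod

/-- The standard polynomial `st_d(x₁,…,x_d) = Σ_{σ ∈ S_d} sgn(σ) x_{σ(1)}⋯x_{σ(d)}`
in the free algebra. -/
noncomputable def stPoly (k : Type*) [CommRing k] (d : ℕ) : FreeAlgebra k ℕ :=
  ∑ σ : Equiv.Perm (Fin d),
    (Equiv.Perm.sign σ : ℤ) •
      ((List.finRange d).map (fun i => FreeAlgebra.ι k ((σ i : Fin d) : ℕ))).prod

/-- `A` satisfies a proper (monic multilinear) polynomial identity: for some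
`n ≥ 1` there are coefficients `c σ ∈ k` for the non-identity permutations `σ`
of `{1,…,n}` such that `x₁⋯x_n + Σ_{σ ≠ id} c_σ x_{σ(1)}⋯x_{σ(n)}` is a
polynomial identity of `A`. -/
def SatisfiesProperId (k A : Type*) [CommRing k] [Semiring A] [Algebra k A] : Prop :=
  ∃ n : ℕ, 1 ≤ n ∧ ∃ c : Equiv.Perm (Fin n) → k,
    IsPolyId k A
      (((List.finRange n).map (fun i => FreeAlgebra.ι k (i : ℕ))).prod
        + ∑ σ ∈ Finset.univ.erase (1 : Equiv.Perm (Fin n)),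
            c σ • ((List.finRange n).map (fun i => FreeAlgebra.ι k ((σ i : Fin n) : ℕ))).prod)

/-- `a` is strongly nilpotent: every sequence `s` with `s 0 = a` and
`s (n+1) ∈ s n • A • s n` is eventually zero. -/
def IsStronglyNilpotent {A : Type*} [Ring A] (a : A) : Prop :=
  ∀ s : ℕ → A, s 0 = a → (∀ n, ∃ x : A, s (n + 1) = s n * x * s n) →
    ∃ N, ∀ n ≥ N, s n = 0

theorem IsPolyId.commutator_pow_eq_zero {k A : Type*} [CommRing k] [Ring A] [Algebra k A]
    {m : ℕ} (h : IsPolyId k A (commPow k m)) (x y : A) : (x * y - y * x) ^ m = 0 := by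
  simpa [commPow] using h fun n => if n = 0 then x else y

open Finset in
theorem MultilinearMap.sum_perm_eq_zero {R M N ι : Type*} [Semiring R] [AddCommMonoid M]
    [AddCommGroup N] [Module R M] [Module R N] [Fintype ι] [DecidableEq ι]
    (F : MultilinearMap R (fun _ : ι => M) N) (hF : ∀ v, F (fun _ => v) = 0) (x : ι → M) :
    ∑ σ : Equiv.Perm ι, F (x ∘ σ) = 0 := by
  classical
  set missing : ι → Finset (ι → ι) := fun i => univ.filter fun f => ∀ k, f k ≠ i
  -- Inclusion–exclusion on the values missed by `f`: the `f` avoiding `t` contribute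
  -- `F (fun _ => ∑ i ∉ t, x i) = 0`, and the surjective `f` are the permutations.
  have hsurj : ∑ f ∈ univ.inf fun i => (missing i)ᶜ, F (x ∘ f) = 0 := by
    rw [inclusion_exclusion_sum_inf_compl]
    refine sum_eq_zero fun t _ => ?_
    have hpi : t.inf missing = Fintype.piFinset fun _ => tᶜ := by
      ext f
      simp only [missing, Finset.mem_inf, mem_filter, mem_univ, true_and, Fintype.mem_piFinset,
        mem_compl]
      grind
    simp only [hpi, Function.comp_def, ← F.map_sum_finset, hF, smul_zero]
  rw [← hsurj]
  refine sum_nbij (fun σ => ⇑σ) (fun σ _ => ?_) (fun σ _ τ _ h => Equiv.ext (congrFun h))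
    (fun f hf => ?_) (fun _ _ => rfl)
  · simpa [missing, Finset.mem_inf, Function.Surjective] using σ.surjective
  · have hf : Function.Surjective f := by
      simpa [missing, Finset.mem_inf, Function.Surjective] using hf
    exact ⟨Equiv.ofBijective f ⟨Finite.injective_iff_surjective.mpr hf, hf⟩, mem_univ _, rfl⟩

/-- Unlike the usual convention, the zero ring counts as prime. -/
def IsPrimeRing (R : Type*) [Ring R] : Prop :=
  ∀ x y : R, (∀ r, x * r * y = 0) → x = 0 ∨ y = 0

section Levitzki

variable {R : Type*} [Ring R]

theorem mul_commutator_pow_of_mul_self_eq_zero {a : R} (ha : a * a = 0) (v : R) (j : ℕ) :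
    a * (a * v - v * a) ^ j = (-1) ^ j * (a * (v * a) ^ j) := by
  induction j with
  | zero => simp
  | succ j ih =>
    have h : a * (v * a) ^ j * a = 0 := by rw [← mul_pow_mul, mul_assoc, ha, mul_zero]
    rw [pow_succ, ← mul_assoc, ih, mul_assoc, mul_sub, ← mul_assoc _ a v, h, pow_succ, pow_succ]
    simp [mul_assoc]

theorem mul_mul_pow_eq_zero_of_mul_self_eq_zero {a : R} (ha : a * a = 0) {v : R} {m : ℕ}
    (hc : (a * v - v * a) ^ m = 0) : a * (v * a) ^ m = 0 := by
  simpa [hc] using (mul_commutator_pow_of_mul_self_eq_zero ha v m).symm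

theorem Equiv.Perm.exists_succ_lt_castSucc {n : ℕ} {σ : Equiv.Perm (Fin (n + 1))} (hσ : σ ≠ 1) :
    ∃ i : Fin n, σ i.succ < σ i.castSucc := by
  by_contra! h
  have hmono : StrictMono σ := (Fin.monotone_iff_le_succ.mpr h).strictMono_of_injective σ.injective
  refine hσ (Equiv.ext fun i => congrFun ((hmono.range_inj strictMono_id).mp ?_) i)
  simp [σ.surjective.range_eq]

theorem List.prod_ofFn_eq_zero_of_mul_eq_zero {M : Type*} [MonoidWithZero M] :
    ∀ {n : ℕ} (g : Fin (n + 1) → M) (i : Fin n), g i.castSucc * g i.succ = 0 →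
      (List.ofFn g).prod = 0
  | 0, _, i, _ => i.elim0
  | n + 1, g, i, h => by
    rw [List.ofFn_succ, List.prod_cons]
    cases i using Fin.cases with
    | zero => rw [List.ofFn_succ, List.prod_cons, ← mul_assoc]; simp_all
    | succ i =>
      rw [List.prod_ofFn_eq_zero_of_mul_eq_zero (fun k => g k.succ) i (by simpa using h), mul_zero]

def sandwichWord (a : R) (n : ℕ) : MultilinearMap ℤ (fun _ : Fin n => R) R :=
  (LinearMap.mulLeft ℤ a).compMultilinearMap
    ((MultilinearMap.mkPiAlgebraFin ℤ n R).compLinearMap fun _ => LinearMap.mulRight ℤ a)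

theorem sandwichWord_apply (a : R) (n : ℕ) (x : Fin n → R) :
    sandwichWord a n x = a * (List.ofFn fun k => x k * a).prod := rfl

theorem sandwichWord_const (a v : R) (n : ℕ) :
    sandwichWord a n (fun _ => v) = a * (v * a) ^ n := by
  simp [sandwichWord_apply]

theorem IsPrimeRing.eq_zero_of_forall_mul_prod_mul_eq_zero (hR : IsPrimeRing R) {p : R}
    (hp : p ≠ 0) : ∀ {x : R}, x ≠ 0 → ∀ (n : ℕ) (t : R),
      (∀ γ : ℕ → R, x * γ 0 * (List.ofFn fun k : Fin n => p * γ (k + 1)).prod * t = 0) → t = 0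
  | x, hx, 0, t, h => (hR x t fun r => by simpa using h fun _ => r).resolve_left hx
  | x, hx, n + 1, t, h => by
    refine hR.eq_zero_of_forall_mul_prod_mul_eq_zero hp hp n t fun γ => ?_
    refine (hR x _ fun r => ?_).resolve_left hx
    simpa [List.ofFn_succ, mul_assoc] using h fun | 0 => r | k + 1 => γ k

/-- The substitution `xᵢ = (v a)^(e - i) γᵢ (a v)^i` into the linearization of `a (x a)^(e + 1)`:
a factor `xᵢ a xⱼ a` with `i > j` contains `a (v a)^(e + 1)`, so only the identity permutation
contributes. -/
def levitzkiTerm (a v : R) (e : ℕ) (γ : ℕ → R) (i : ℕ) : R :=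
  (v * a) ^ (e - i) * γ i * (a * v) ^ i

variable {a v : R} {e : ℕ} {γ : ℕ → R}

theorem levitzkiTerm_mul_mul_eq_zero (hD : ∀ w, a * (w * a) ^ (e + 1) = 0) {i j : ℕ}
    (hji : j < i) : levitzkiTerm a v e γ i * a * (levitzkiTerm a v e γ j * a) = 0 := by
  have h0 : a * (v * a) ^ (i + (e - j)) = 0 := by
    obtain ⟨d, hd⟩ : ∃ d, i + (e - j) = e + 1 + d := ⟨i + (e - j) - (e + 1), by omega⟩
    rw [hd, pow_add, ← mul_assoc, hD, zero_mul]
  calc _ = (v * a) ^ (e - i) * γ i * ((a * v) ^ i * a) * (v * a) ^ (e - j)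
        * (γ j * (a * v) ^ j * a) := by simp only [levitzkiTerm, mul_assoc]
    _ = 0 := by rw [mul_pow_mul, mul_assoc _ (a * _), mul_assoc a, ← pow_add, h0]; simp

theorem mul_pow_mul_prod_ofFn_levitzkiTerm (n : ℕ) :
    ∀ j : ℕ, j + n = e → a * (v * a) ^ j * (List.ofFn fun k : Fin n =>
        levitzkiTerm a v e γ (k + j + 1) * a).prod
      = (List.ofFn fun k : Fin n => a * (v * a) ^ (e - 1) * γ (k + j + 1)).prod
        * (a * (v * a) ^ e) := by
  induction n with
  | zero => intro j h; simp [show j = e by omega]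
  | succ n ih =>
    intro j h
    have hp : a * (v * a) ^ j * (v * a) ^ (e - (j + 1)) = a * (v * a) ^ (e - 1) := by
      rw [mul_assoc, ← pow_add, show j + (e - (j + 1)) = e - 1 by omega]
    simp only [List.ofFn_succ, List.prod_cons, Fin.val_zero, Fin.val_succ, zero_add,
      show ∀ k : ℕ, k + 1 + j + 1 = k + (j + 1) + 1 by omega]
    rw [mul_assoc (a * (v * a) ^ (e - 1) * γ (j + 1)), ← ih (j + 1) (by omega)]
    simp only [levitzkiTerm, ← hp, mul_pow_mul, mul_assoc]

theorem mul_prod_ofFn_levitzkiTerm :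
    a * (List.ofFn fun k : Fin (e + 1) => levitzkiTerm a v e γ k * a).prod
      = a * (v * a) ^ e * γ 0 * (List.ofFn fun k : Fin e => a * (v * a) ^ (e - 1) * γ (k + 1)).prod
        * (a * (v * a) ^ e) := by
  have := mul_pow_mul_prod_ofFn_levitzkiTerm (a := a) (v := v) (γ := γ) e 0 (zero_add e)
  simp only [add_zero] at this
  rw [List.ofFn_succ, List.prod_cons, mul_assoc _ _ (a * _), ← this]
  simp [levitzkiTerm, mul_assoc]

theorem IsPrimeRing.mul_pow_eq_zero_of_forall_mul_pow_succ_eq_zero (hR : IsPrimeRing R)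
    (hD : ∀ w, a * (w * a) ^ (e + 1) = 0) (v : R) : a * (v * a) ^ e = 0 := by
  by_contra hq
  have hp : a * (v * a) ^ (e - 1) ≠ 0 := fun hp => hq <| by
    rw [show e = e - 1 + (e - (e - 1)) by omega, pow_add, ← mul_assoc, hp, zero_mul]
  refine hq (hR.eq_zero_of_forall_mul_prod_mul_eq_zero hp hq e _ fun γ => ?_)
  rw [← mul_prod_ofFn_levitzkiTerm]
  have hsum := (sandwichWord a (e + 1)).sum_perm_eq_zero
    (fun w => by rw [sandwichWord_const, hD]) (fun k => levitzkiTerm a v e γ k)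
  rwa [Finset.sum_eq_single 1 (fun σ _ hσ => ?_) (by simp)] at hsum
  obtain ⟨i, hi⟩ := σ.exists_succ_lt_castSucc hσ
  rw [sandwichWord_apply,
    List.prod_ofFn_eq_zero_of_mul_eq_zero _ i (levitzkiTerm_mul_mul_eq_zero hD hi), mul_zero]

theorem IsPrimeRing.eq_zero_of_forall_mul_pow_eq_zero (hR : IsPrimeRing R) :
    ∀ {e : ℕ}, (∀ v, a * (v * a) ^ e = 0) → a = 0
  | 0, hD => by simpa using hD 1
  | _ + 1, hD => hR.eq_zero_of_forall_mul_pow_eq_zero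
      (hR.mul_pow_eq_zero_of_forall_mul_pow_succ_eq_zero hD)

end Levitzki

section PrimeRing

variable {R : Type*} [Ring R] {m : ℕ}

theorem IsPrimeRing.isReduced (hR : IsPrimeRing R) (hid : ∀ x y : R, (x * y - y * x) ^ m = 0) :
    IsReduced R :=
  (isReduced_iff_pow_one_lt 2 one_lt_two).mpr fun a ha =>
    hR.eq_zero_of_forall_mul_pow_eq_zero fun v =>
      mul_mul_pow_eq_zero_of_mul_self_eq_zero (by rwa [sq] at ha) (hid a v)

theorem IsPrimeRing.mul_comm (hR : IsPrimeRing R) (hid : ∀ x y : R, (x * y - y * x) ^ m = 0)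
    (x y : R) : x * y = y * x :=
  have := hR.isReduced hid
  sub_eq_zero.mp (IsNilpotent.eq_zero ⟨m, hid x y⟩)

theorem IsPrimeRing.noZeroDivisors (hR : IsPrimeRing R) (hcomm : ∀ x y : R, x * y = y * x) :
    NoZeroDivisors R where
  eq_zero_or_eq_zero_of_mul_eq_zero {x y} h :=
    hR x y fun r => by rw [mul_assoc, hcomm r y, ← mul_assoc, h, zero_mul]

theorem IsPrimeRing.of_surjective {S : Type*} [Ring S] (f : R →+* S) (hf : Function.Surjective f)
    (h : ∀ x y, (∀ r, f (x * r * y) = 0) → f x = 0 ∨ f y = 0) : IsPrimeRing S := by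
  intro x y hxy
  obtain ⟨x, rfl⟩ := hf x
  obtain ⟨y, rfl⟩ := hf y
  exact h x y fun r => by simpa using hxy (f r)

end PrimeRing

namespace TwoSidedIdeal

variable {R : Type*} [Ring R]

theorem exists_coe_eq_biUnion_of_isChain {c : Set (TwoSidedIdeal R)} (hc : IsChain (· ≤ ·) c)
    (hne : c.Nonempty) : ∃ U : TwoSidedIdeal R, (U : Set R) = ⋃ I ∈ c, (I : Set R) := by
  refine ⟨mk' (⋃ I ∈ c, (I : Set R)) ?_ ?_ ?_ ?_ ?_, coe_mk' ..⟩ <;> simp only [Set.mem_iUnion₂]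
  · exact ⟨hne.some, hne.some_mem, zero_mem _⟩
  · rintro x y ⟨I, hI, hx⟩ ⟨J, hJ, hy⟩
    rcases hc.total hI hJ with h | h
    · exact ⟨J, hJ, J.add_mem (h hx) hy⟩
    · exact ⟨I, hI, I.add_mem hx (h hy)⟩
  · rintro x ⟨I, hI, hx⟩; exact ⟨I, hI, I.neg_mem hx⟩
  · rintro x y ⟨I, hI, hy⟩; exact ⟨I, hI, mul_mem_left _ x y hy⟩
  · rintro x y ⟨I, hI, hx⟩; exact ⟨I, hI, mul_mem_right _ x y hx⟩

theorem exists_maximal_forall_pow_not_mem {a : R} (ha : ¬IsNilpotent a) :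
    ∃ P : TwoSidedIdeal R, Maximal (fun I : TwoSidedIdeal R => ∀ n, a ^ n ∉ I) P := by
  have hchain : ∀ c ⊆ {I : TwoSidedIdeal R | ∀ n, a ^ n ∉ I}, IsChain (· ≤ ·) c → ∀ I ∈ c,
      ∃ U ∈ {I : TwoSidedIdeal R | ∀ n, a ^ n ∉ I}, ∀ J ∈ c, J ≤ U := by
    intro c hcs hc I hI
    obtain ⟨U, hU⟩ := exists_coe_eq_biUnion_of_isChain hc ⟨I, hI⟩
    refine ⟨U, fun n hn => ?_, fun J hJ x hx => ?_⟩
    · obtain ⟨J, hJ, hn⟩ := Set.mem_iUnion₂.mp (hU ▸ SetLike.mem_coe.mpr hn)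
      exact hcs hJ n hn
    · exact SetLike.mem_coe.mp (hU ▸ Set.mem_iUnion₂.mpr ⟨J, hJ, hx⟩)
  obtain ⟨P, -, hP⟩ := zorn_le_nonempty₀ _ hchain ⊥ fun n h => ha ⟨n, (mem_bot _).mp h⟩
  exact ⟨P, hP⟩

/-- If `x, y ∉ P`, the ideals `Q = {t | t R y ⊆ P}` and `{s | Q s ⊆ P}` strictly contain `P`, so
each contains a power of `a`, and the product of these powers lies in `P`. -/
theorem mem_or_mem_of_maximal_forall_pow_not_mem {a : R} {P : TwoSidedIdeal R}
    (hP : Maximal (fun I : TwoSidedIdeal R => ∀ n, a ^ n ∉ I) P) {x y : R}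
    (hxy : ∀ r, x * r * y ∈ P) : x ∈ P ∨ y ∈ P := by
  have hpow : ∀ I : TwoSidedIdeal R, P ≤ I → ¬I ≤ P → ∃ n, a ^ n ∈ I := fun I hPI hIP => by
    by_contra! h
    exact hIP (hP.2 h hPI)
  let Q : TwoSidedIdeal R := mk' {t | ∀ r, t * r * y ∈ P} (by simp [P.zero_mem])
    (fun hx hy r => by simpa [add_mul] using P.add_mem (hx r) (hy r))
    (fun hx r => by simpa using P.neg_mem (hx r))
    (fun hy r => by simpa [mul_assoc] using P.mul_mem_left _ _ (hy r))
    (fun {t s} hx r => by simpa [mul_assoc] using hx (s * r))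
  have hQ : ∀ t, t ∈ Q ↔ ∀ r, t * r * y ∈ P := fun t => mem_mk' ..
  let Q' : TwoSidedIdeal R := mk' {s | ∀ t ∈ Q, t * s ∈ P} (by simp [P.zero_mem])
    (fun hx hy t ht => by simpa [mul_add] using P.add_mem (hx t ht) (hy t ht))
    (fun hx t ht => by simpa using P.neg_mem (hx t ht))
    (fun {u s} hs t ht => by simpa [mul_assoc] using hs _ (Q.mul_mem_right _ u ht))
    (fun {s u} hs t ht => by simpa [mul_assoc] using P.mul_mem_right _ u (hs t ht))
  have hQ' : ∀ s, s ∈ Q' ↔ ∀ t ∈ Q, t * s ∈ P := fun s => mem_mk' ..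
  have hPQ : P ≤ Q := fun t ht => (hQ t).mpr fun r => P.mul_mem_right _ y (P.mul_mem_right _ r ht)
  have hPQ' : P ≤ Q' := fun s hs => (hQ' s).mpr fun t _ => P.mul_mem_left t s hs
  by_contra! h
  obtain ⟨i, hi⟩ := hpow Q hPQ fun hQP => h.1 (hQP ((hQ x).mpr hxy))
  obtain ⟨j, hj⟩ := hpow Q' hPQ' fun hQP => h.2 (hQP ((hQ' y).mpr fun t ht => by
    simpa using (hQ t).mp ht 1))
  exact hP.1 (i + j) (pow_add a i j ▸ (hQ' _).mp hj _ hi)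

end TwoSidedIdeal

universe u v

theorem nilpotent_iff_in_all_commDomain_kernels_general
    (k : Type u) (A : Type v) [CommRing k] [Ring A] [Algebra k A]
    (m : ℕ) (hid : IsPolyId k A (commPow k m)) (a : A) :
    IsNilpotent a ↔
      ∀ (B : Type v) [CommRing B] [IsDomain B] (f : A →+* B),
        Function.Surjective f → f a = 0 := by
  refine ⟨fun ha B _ _ f _ => (ha.map f).eq_zero, fun hall => ?_⟩
  by_contra ha
  obtain ⟨P, hP⟩ := TwoSidedIdeal.exists_maximal_forall_pow_not_mem ha
  let f := P.ringCon.mk'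
  have hf : Function.Surjective f := P.ringCon.mk'_surjective
  have hker : ∀ z, f z = 0 ↔ z ∈ P := fun z => by
    rw [← TwoSidedIdeal.mem_ker, TwoSidedIdeal.ker_ringCon_mk']
  have hR : IsPrimeRing P.ringCon.Quotient := IsPrimeRing.of_surjective f hf fun x y h => by
    simpa only [hker] using P.mem_or_mem_of_maximal_forall_pow_not_mem hP fun r => (hker _).mp (h r)
  have hidB : ∀ x y : P.ringCon.Quotient, (x * y - y * x) ^ m = 0 := hf.forall₂.mpr fun x y => by
    simp only [← map_mul, ← map_sub, ← map_pow, hid.commutator_pow_eq_zero, map_zero]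
  let _ : CommRing P.ringCon.Quotient := { mul_comm := hR.mul_comm hidB }
  have hfa : f a ≠ 0 := fun h => hP.1 1 (by simpa using (hker a).mp h)
  have : Nontrivial P.ringCon.Quotient := ⟨⟨f a, 0, hfa⟩⟩
  have := hR.noZeroDivisors (hR.mul_comm hidB)
  have := NoZeroDivisors.to_isDomain P.ringCon.Quotient
  exact hfa (hall _ f hf)

theorem nilpotent_iff_in_all_commDomain_kernels
    (k : Type u) (A : Type v) [CommRing k] [Ring A] [Algebra k A]
    (m : ℕ) (hm : 1 ≤ m) (hid : IsPolyId k A (commPow k m)) (a : A) :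
    IsNilpotent a ↔
      ∀ (B : Type v) [CommRing B] [IsDomain B] (f : A →+* B),
        Function.Surjective f → f a = 0 :=
  nilpotent_iff_in_all_commDomain_kernels_general k A m hid a
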